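/- At every point of the Cartan–Hartogs domain M_Ω(μ), the Ricci tensor of g(μ) satisfies: Ric_{jk̄} = ((μ(d+1)−γ)/μ) g^{Ω(μ)}_{jk̄} − (d+2) g(μ)_{jk̄} for all 1 ≤ j,k ≤ d, and Ric_{αβ̄} = −(d+2) g(μ)_{αβ̄} whenever α = d+1 or β = d+1 (i.e. Ric_{jw̄} = −(d+2)g(μ)_{jw̄}, Ric_{wk̄} = −(d+2)g(μ)_{wk̄}, Ric_{ww̄} = −(d+2)g(μ)_{ww̄}). -/

import Mathlib

open Complex Matrix
open scoped ComplexOrder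

noncomputable section

/-- Wirtinger derivative `∂f/∂z_j` of a function `f : ℂ^n → ℂ`. -/
def wD {n : ℕ} (j : Fin n) (f : (Fin n → ℂ) → ℂ) : (Fin n → ℂ) → ℂ :=
  fun p => (1 / 2 : ℂ) *
    (fderiv ℝ f p (Pi.single j 1) - Complex.I * fderiv ℝ f p (Pi.single j Complex.I))

/-- Conjugate Wirtinger derivative `∂f/∂z̄_j` of a function `f : ℂ^n → ℂ`. -/
def wDbar {n : ℕ} (j : Fin n) (f : (Fin n → ℂ) → ℂ) : (Fin n → ℂ) → ℂ :=
  fun p => (1 / 2 : ℂ) *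
    (fderiv ℝ f p (Pi.single j 1) + Complex.I * fderiv ℝ f p (Pi.single j Complex.I))

variable (d : ℕ) (μ : ℝ) (N : (Fin d → ℂ) → ℝ)

/-- `N^μ` as a complex-valued function on `ℂ^d`. -/
def NmuC : (Fin d → ℂ) → ℂ := fun z => ((N z ^ μ : ℝ) : ℂ)

/-- The Kähler potential `Φ(z,w) = -log(N(z)^μ - |w|²)` of the Cartan–Hartogs domain,
identifying `(z,w)` with the point `p : ℂ^{d+1}`, `z = p ∘ castSucc`, `w = p (last)`. -/
def CHpot : (Fin (d + 1) → ℂ) → ℂ :=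
  fun p =>
    -(((Real.log (N (fun j => p j.castSucc) ^ μ - ‖p (Fin.last d)‖ ^ 2)) : ℂ))

/-- The component `g(μ)_{αβ̄} = ∂²Φ/∂z_α∂z̄_β` of the Cartan--Hartogs metric. -/
def gCH (α β : Fin (d + 1)) : (Fin (d + 1) → ℂ) → ℂ := wD α (wDbar β (CHpot d μ N))

/-- The matrix of the Cartan--Hartogs metric `g(μ)` at a point `p`. -/
def gCHmat (p : Fin (d + 1) → ℂ) : Matrix (Fin (d + 1)) (Fin (d + 1)) ℂ :=
  Matrix.of fun α β => gCH d μ N α β p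

/-- The component `g^{Ω(μ)}_{jk̄} = -∂² log N^μ/∂z_j∂z̄_k`. -/
def gOm (j k : Fin d) : (Fin d → ℂ) → ℂ :=
  fun z => -(wD j (wDbar k fun y => ((Real.log (N y ^ μ) : ℝ) : ℂ)) z)

/-- The matrix of the metric `g^{Ω(μ)}` at a point `z ∈ Ω`. -/
def gOmMat (z : Fin d → ℂ) : Matrix (Fin d) (Fin d) ℂ :=
  Matrix.of fun j k => gOm d μ N j k z

/-- The Ricci tensor `Ric_{αβ̄} = -∂² log det(g(μ))/∂z_α∂z̄_β` of `g(μ)`. -/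
def RicCH (α β : Fin (d + 1)) : (Fin (d + 1) → ℂ) → ℂ :=
  fun p => -(wD α (wDbar β fun q => Complex.log ((gCHmat d μ N q).det)) p)

/-- The scalar curvature `κ_{g(μ)} = Σ_{α,β} g(μ)^{βᾱ} Ric_{αβ̄}` of `g(μ)`. -/
def scalCH : (Fin (d + 1) → ℂ) → ℂ :=
  fun p => ∑ α : Fin (d + 1), ∑ β : Fin (d + 1),
    (gCHmat d μ N p)⁻¹ β α * RicCH d μ N α β p

/-- The curvature tensor
`R_{αβ̄ητ̄} = -g(μ)_{αβ̄ητ̄} + Σ_{ζ,θ} g(μ)^{ζθ̄} g(μ)_{αζ̄η} g(μ)_{θτ̄β̄}` of `g(μ)`. -/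
def Rcurv (α β η τ : Fin (d + 1)) : (Fin (d + 1) → ℂ) → ℂ :=
  fun p => -(wDbar τ (wD η (gCH d μ N α β)) p) +
    ∑ ζ : Fin (d + 1), ∑ θ : Fin (d + 1),
      (gCHmat d μ N p)⁻¹ ζ θ * wD η (gCH d μ N α ζ) p * wDbar β (gCH d μ N θ τ) p

/-- The squared norm `|R|²` of the curvature tensor of `g(μ)`. -/
def Rnorm2 : (Fin (d + 1) → ℂ) → ℂ :=
  fun p => ∑ α : Fin (d+1), ∑ β : Fin (d+1), ∑ η : Fin (d+1), ∑ θ : Fin (d+1),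
    ∑ ζ : Fin (d+1), ∑ ν : Fin (d+1), ∑ ξ : Fin (d+1), ∑ τ : Fin (d+1),
      (starRingEnd ℂ) ((gCHmat d μ N p)⁻¹ α ζ) * (gCHmat d μ N p)⁻¹ β ν *
      (starRingEnd ℂ) ((gCHmat d μ N p)⁻¹ η ξ) * (gCHmat d μ N p)⁻¹ θ τ *
      Rcurv d μ N α β η θ p * (starRingEnd ℂ) (Rcurv d μ N ζ ν ξ τ p)

/-- The squared norm `|Ric|²` of the Ricci tensor of `g(μ)`. -/
def RicNorm2 : (Fin (d + 1) → ℂ) → ℂ :=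
  fun p => ∑ α : Fin (d+1), ∑ β : Fin (d+1), ∑ η : Fin (d+1), ∑ τ : Fin (d+1),
    (starRingEnd ℂ) ((gCHmat d μ N p)⁻¹ η τ) * (gCHmat d μ N p)⁻¹ α β *
    RicCH d μ N η α p * (starRingEnd ℂ) (RicCH d μ N τ β p)

/-- The Laplacian `Δκ_{g(μ)} = Σ_{α,β} g(μ)^{αβ̄} ∂²κ_{g(μ)}/∂z_α∂z̄_β`. -/
def lapScalCH : (Fin (d + 1) → ℂ) → ℂ :=
  fun p => ∑ α : Fin (d+1), ∑ β : Fin (d+1),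
    (gCHmat d μ N p)⁻¹ α β * wDbar β (wD α (scalCH d μ N)) p

/-- The Ricci tensor of `g^{Ω(μ)}`. -/
def RicOm (j k : Fin d) : (Fin d → ℂ) → ℂ :=
  fun z => -(wD j (wDbar k fun y => Complex.log ((gOmMat d μ N y).det)) z)

/-- The scalar curvature `κ_{g^{Ω(μ)}}` of `g^{Ω(μ)}`. -/
def scalOm : (Fin d → ℂ) → ℂ :=
  fun z => ∑ j : Fin d, ∑ k : Fin d, (gOmMat d μ N z)⁻¹ k j * RicOm d μ N j k z

/-- The curvature tensor of `g^{Ω(μ)}`. -/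
def RcurvOm (i j k l : Fin d) : (Fin d → ℂ) → ℂ :=
  fun z => -(wDbar l (wD k (gOm d μ N i j)) z) +
    ∑ p : Fin d, ∑ q : Fin d,
      (gOmMat d μ N z)⁻¹ p q * wD k (gOm d μ N i p) z * wDbar j (gOm d μ N q l) z

/-- The squared norm `|R_{g^{Ω(μ)}}|²` of the curvature tensor of `g^{Ω(μ)}`. -/
def Rnorm2Om : (Fin d → ℂ) → ℂ :=
  fun z => ∑ α : Fin d, ∑ β : Fin d, ∑ η : Fin d, ∑ θ : Fin d,
    ∑ ζ : Fin d, ∑ ν : Fin d, ∑ ξ : Fin d, ∑ τ : Fin d,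
      (starRingEnd ℂ) ((gOmMat d μ N z)⁻¹ α ζ) * (gOmMat d μ N z)⁻¹ β ν *
      (starRingEnd ℂ) ((gOmMat d μ N z)⁻¹ η ξ) * (gOmMat d μ N z)⁻¹ θ τ *
      RcurvOm d μ N α β η θ z * (starRingEnd ℂ) (RcurvOm d μ N ζ ν ξ τ z)

end

section CHAux
open Complex

variable {n m : ℕ}

lemma wD_congr {f g : (Fin n → ℂ) → ℂ} {p : Fin n → ℂ} (j : Fin n) (h : f =ᶠ[nhds p] g) :
    wD j f p = wD j g p := by
  unfold wD; rw [h.fderiv_eq]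

lemma wDbar_congr {f g : (Fin n → ℂ) → ℂ} {p : Fin n → ℂ} (j : Fin n) (h : f =ᶠ[nhds p] g) :
    wDbar j f p = wDbar j g p := by
  unfold wDbar; rw [h.fderiv_eq]

lemma wD_fderiv_smul {f g : (Fin n → ℂ) → ℂ} {p : Fin n → ℂ} {c : ℂ}
    (h : fderiv ℝ g p = c • fderiv ℝ f p) (j : Fin n) :
    wD j g p = c * wD j f p := by
  unfold wD; rw [h]; simp only [ContinuousLinearMap.smul_apply, smul_eq_mul]; ring

lemma wDbar_fderiv_smul {f g : (Fin n → ℂ) → ℂ} {p : Fin n → ℂ} {c : ℂ}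
    (h : fderiv ℝ g p = c • fderiv ℝ f p) (j : Fin n) :
    wDbar j g p = c * wDbar j f p := by
  unfold wDbar; rw [h]; simp only [ContinuousLinearMap.smul_apply, smul_eq_mul]; ring

lemma wD_add {f g : (Fin n → ℂ) → ℂ} {p : Fin n → ℂ} (j : Fin n)
    (hf : DifferentiableAt ℝ f p) (hg : DifferentiableAt ℝ g p) :
    wD j (fun q => f q + g q) p = wD j f p + wD j g p := by
  unfold wD; rw [fderiv_fun_add hf hg]; simp only [ContinuousLinearMap.add_apply]; ring

lemma wDbar_add {f g : (Fin n → ℂ) → ℂ} {p : Fin n → ℂ} (j : Fin n)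
    (hf : DifferentiableAt ℝ f p) (hg : DifferentiableAt ℝ g p) :
    wDbar j (fun q => f q + g q) p = wDbar j f p + wDbar j g p := by
  unfold wDbar; rw [fderiv_fun_add hf hg]; simp only [ContinuousLinearMap.add_apply]; ring

lemma wD_neg {f : (Fin n → ℂ) → ℂ} {p : Fin n → ℂ} (j : Fin n) :
    wD j (fun q => -(f q)) p = -(wD j f p) := by
  unfold wD; rw [fderiv_fun_neg]; simp only [ContinuousLinearMap.neg_apply]; ring

lemma wDbar_neg {f : (Fin n → ℂ) → ℂ} {p : Fin n → ℂ} (j : Fin n) :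
    wDbar j (fun q => -(f q)) p = -(wDbar j f p) := by
  unfold wDbar; rw [fderiv_fun_neg]; simp only [ContinuousLinearMap.neg_apply]; ring

lemma wD_sub {f g : (Fin n → ℂ) → ℂ} {p : Fin n → ℂ} (j : Fin n)
    (hf : DifferentiableAt ℝ f p) (hg : DifferentiableAt ℝ g p) :
    wD j (fun q => f q - g q) p = wD j f p - wD j g p := by
  unfold wD; rw [fderiv_fun_sub hf hg]; simp only [ContinuousLinearMap.sub_apply]; ring

lemma wDbar_sub {f g : (Fin n → ℂ) → ℂ} {p : Fin n → ℂ} (j : Fin n)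
    (hf : DifferentiableAt ℝ f p) (hg : DifferentiableAt ℝ g p) :
    wDbar j (fun q => f q - g q) p = wDbar j f p - wDbar j g p := by
  unfold wDbar; rw [fderiv_fun_sub hf hg]; simp only [ContinuousLinearMap.sub_apply]; ring

lemma wD_const_mul {f : (Fin n → ℂ) → ℂ} {p : Fin n → ℂ} (j : Fin n) (c : ℂ)
    (hf : DifferentiableAt ℝ f p) :
    wD j (fun q => c * f q) p = c * wD j f p := by
  refine wD_fderiv_smul ?_ j
  rw [fderiv_const_mul hf]

lemma wDbar_const_mul {f : (Fin n → ℂ) → ℂ} {p : Fin n → ℂ} (j : Fin n) (c : ℂ)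
    (hf : DifferentiableAt ℝ f p) :
    wDbar j (fun q => c * f q) p = c * wDbar j f p := by
  refine wDbar_fderiv_smul ?_ j
  rw [fderiv_const_mul hf]

lemma wD_mul {f g : (Fin n → ℂ) → ℂ} {p : Fin n → ℂ} (j : Fin n)
    (hf : DifferentiableAt ℝ f p) (hg : DifferentiableAt ℝ g p) :
    wD j (fun q => f q * g q) p = wD j f p * g p + f p * wD j g p := by
  unfold wD; rw [fderiv_fun_mul hf hg]
  simp only [ContinuousLinearMap.add_apply, ContinuousLinearMap.smul_apply, smul_eq_mul]
  ring

lemma wDbar_mul {f g : (Fin n → ℂ) → ℂ} {p : Fin n → ℂ} (j : Fin n)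
    (hf : DifferentiableAt ℝ f p) (hg : DifferentiableAt ℝ g p) :
    wDbar j (fun q => f q * g q) p = wDbar j f p * g p + f p * wDbar j g p := by
  unfold wDbar; rw [fderiv_fun_mul hf hg]
  simp only [ContinuousLinearMap.add_apply, ContinuousLinearMap.smul_apply, smul_eq_mul]
  ring

lemma wD_zero {p : Fin n → ℂ} (j : Fin n) : wD j (fun _ => (0:ℂ)) p = 0 := by
  unfold wD; rw [fderiv_fun_const]; simp

lemma wDbar_zero {p : Fin n → ℂ} (j : Fin n) : wDbar j (fun _ => (0:ℂ)) p = 0 := by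
  unfold wDbar; rw [fderiv_fun_const]; simp

end CHAux
section CHAux2
open Complex

variable {n d : ℕ}

lemma fderiv_inv_comp {f : (Fin n → ℂ) → ℂ} {p : Fin n → ℂ}
    (hf : DifferentiableAt ℝ f p) (hz : f p ≠ 0) :
    fderiv ℝ (fun q => (f q)⁻¹) p = (-((f p) ^ 2)⁻¹) • fderiv ℝ f p := by
  have h1 : HasFDerivAt (fun y : ℂ => y⁻¹)
      (((1 : ℂ →L[ℂ] ℂ).smulRight (-((f p) ^ 2)⁻¹)).restrictScalars ℝ) (f p) :=
    ((hasDerivAt_inv hz).hasFDerivAt).restrictScalars ℝ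
  have h2 : HasFDerivAt (fun q => (f q)⁻¹)
      ((((1 : ℂ →L[ℂ] ℂ).smulRight (-((f p) ^ 2)⁻¹)).restrictScalars ℝ).comp (fderiv ℝ f p)) p :=
    h1.comp p hf.hasFDerivAt
  rw [h2.fderiv]
  ext v
  simp [mul_comm]

lemma wD_inv {f : (Fin n → ℂ) → ℂ} {p : Fin n → ℂ} (j : Fin n)
    (hf : DifferentiableAt ℝ f p) (hz : f p ≠ 0) :
    wD j (fun q => (f q)⁻¹) p = -((f p) ^ 2)⁻¹ * wD j f p :=
  wD_fderiv_smul (fderiv_inv_comp hf hz) j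

lemma wDbar_inv {f : (Fin n → ℂ) → ℂ} {p : Fin n → ℂ} (j : Fin n)
    (hf : DifferentiableAt ℝ f p) (hz : f p ≠ 0) :
    wDbar j (fun q => (f q)⁻¹) p = -((f p) ^ 2)⁻¹ * wDbar j f p :=
  wDbar_fderiv_smul (fderiv_inv_comp hf hz) j

lemma fderiv_oR_log {u : (Fin n → ℂ) → ℝ} {p : Fin n → ℂ}
    (hu : DifferentiableAt ℝ u p) (hz : u p ≠ 0) :
    fderiv ℝ (fun q => ((Real.log (u q) : ℝ) : ℂ)) p
      = (((u p)⁻¹ : ℝ) : ℂ) • fderiv ℝ (fun q => ((u q : ℝ) : ℂ)) p := by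
  have h1 : HasFDerivAt (fun q => Real.log (u q)) ((u p)⁻¹ • fderiv ℝ u p) p :=
    (Real.hasDerivAt_log hz).comp_hasFDerivAt p hu.hasFDerivAt
  have h2 : HasFDerivAt (fun q => ((Real.log (u q) : ℝ) : ℂ))
      (Complex.ofRealCLM.comp ((u p)⁻¹ • fderiv ℝ u p)) p :=
    Complex.ofRealCLM.hasFDerivAt.comp p h1
  have h3 : HasFDerivAt (fun q => ((u q : ℝ) : ℂ)) (Complex.ofRealCLM.comp (fderiv ℝ u p)) p :=
    Complex.ofRealCLM.hasFDerivAt.comp p hu.hasFDerivAt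
  rw [h2.fderiv, h3.fderiv]
  ext v
  simp

lemma wD_oR_log {u : (Fin n → ℂ) → ℝ} {p : Fin n → ℂ} (j : Fin n)
    (hu : DifferentiableAt ℝ u p) (hz : u p ≠ 0) :
    wD j (fun q => ((Real.log (u q) : ℝ) : ℂ)) p
      = (((u p)⁻¹ : ℝ) : ℂ) * wD j (fun q => ((u q : ℝ) : ℂ)) p :=
  wD_fderiv_smul (fderiv_oR_log hu hz) j

lemma wDbar_oR_log {u : (Fin n → ℂ) → ℝ} {p : Fin n → ℂ} (j : Fin n)
    (hu : DifferentiableAt ℝ u p) (hz : u p ≠ 0) :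
    wDbar j (fun q => ((Real.log (u q) : ℝ) : ℂ)) p
      = (((u p)⁻¹ : ℝ) : ℂ) * wDbar j (fun q => ((u q : ℝ) : ℂ)) p :=
  wDbar_fderiv_smul (fderiv_oR_log hu hz) j

-- coordinate lemmas
lemma fderiv_coord (i : Fin n) (p : Fin n → ℂ) :
    fderiv ℝ (fun q : Fin n → ℂ => q i) p = ContinuousLinearMap.proj i :=
  (ContinuousLinearMap.proj i : (Fin n → ℂ) →L[ℝ] ℂ).fderiv

lemma wD_coord (j i : Fin n) (p : Fin n → ℂ) :
    wD j (fun q => q i) p = if i = j then 1 else 0 := by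
  unfold wD; rw [fderiv_coord]
  rcases eq_or_ne i j with h | h
  · subst h; simp; norm_num
  · simp [Pi.single_eq_of_ne h, h]

lemma wDbar_coord (j i : Fin n) (p : Fin n → ℂ) :
    wDbar j (fun q => q i) p = 0 := by
  unfold wDbar; rw [fderiv_coord]
  rcases eq_or_ne i j with h | h
  · subst h; simp [Complex.ext_iff]
  · simp [Pi.single_eq_of_ne h]

lemma fderiv_coord_conj (i : Fin n) (p : Fin n → ℂ) :
    fderiv ℝ (fun q : Fin n → ℂ => (starRingEnd ℂ) (q i)) p
      = (Complex.conjCLE.toContinuousLinearMap).comp (ContinuousLinearMap.proj i) := by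
  exact ((Complex.conjCLE.toContinuousLinearMap).comp
    (ContinuousLinearMap.proj i : (Fin n → ℂ) →L[ℝ] ℂ)).fderiv

lemma wD_coord_conj (j i : Fin n) (p : Fin n → ℂ) :
    wD j (fun q => (starRingEnd ℂ) (q i)) p = 0 := by
  unfold wD; rw [fderiv_coord_conj]
  rcases eq_or_ne i j with h | h
  · subst h; simp [Complex.ext_iff]
  · simp [Pi.single_eq_of_ne h]

lemma wDbar_coord_conj (j i : Fin n) (p : Fin n → ℂ) :
    wDbar j (fun q => (starRingEnd ℂ) (q i)) p = if i = j then 1 else 0 := by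
  unfold wDbar; rw [fderiv_coord_conj]
  rcases eq_or_ne i j with h | h
  · subst h; simp; norm_num
  · simp [Pi.single_eq_of_ne h, h]

end CHAux2
section CHAux3
open Complex

variable {n d : ℕ}

/-- The projection `ℂ^{d+1} → ℂ^d` forgetting the last coordinate, as a CLM. -/
noncomputable def projCLM (d : ℕ) : (Fin (d+1) → ℂ) →L[ℝ] (Fin d → ℂ) :=
  ContinuousLinearMap.pi fun j => ContinuousLinearMap.proj j.castSucc

lemma projCLM_apply (q : Fin (d+1) → ℂ) : projCLM d q = fun j => q j.castSucc := rfl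

lemma projCLM_single_castSucc (j : Fin d) (c : ℂ) :
    projCLM d (Pi.single j.castSucc c) = Pi.single j c := by
  funext k
  rcases eq_or_ne k j with h | h
  · subst h; simp [projCLM_apply]
  · have : (k.castSucc : Fin (d+1)) ≠ j.castSucc := by
      simpa [Fin.castSucc_inj] using h
    simp [projCLM_apply, Pi.single_eq_of_ne this, Pi.single_eq_of_ne h]

lemma projCLM_single_last (c : ℂ) :
    projCLM d (Pi.single (Fin.last d) c) = 0 := by
  funext k
  have : (k.castSucc : Fin (d+1)) ≠ Fin.last d := (Fin.castSucc_lt_last k).ne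
  simp [projCLM_apply, Pi.single_eq_of_ne this]

lemma fderiv_comp_proj {h : (Fin d → ℂ) → ℂ} {q : Fin (d+1) → ℂ}
    (hh : DifferentiableAt ℝ h (fun j => q j.castSucc)) :
    fderiv ℝ (fun q' => h (fun j => q' j.castSucc)) q
      = (fderiv ℝ h (fun j => q j.castSucc)).comp (projCLM d) := by
  have : (fun q' : Fin (d+1) → ℂ => h (fun j => q' j.castSucc)) = h ∘ (projCLM d) := rfl
  rw [this, fderiv_comp q hh ((projCLM d).differentiableAt), (projCLM d).fderiv]
  rfl

lemma wD_comp_proj_castSucc {h : (Fin d → ℂ) → ℂ} {q : Fin (d+1) → ℂ} (j : Fin d)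
    (hh : DifferentiableAt ℝ h (fun j => q j.castSucc)) :
    wD j.castSucc (fun q' => h (fun i => q' i.castSucc)) q = wD j h (fun i => q i.castSucc) := by
  unfold wD; rw [fderiv_comp_proj hh]
  simp [ContinuousLinearMap.comp_apply, projCLM_single_castSucc]

lemma wDbar_comp_proj_castSucc {h : (Fin d → ℂ) → ℂ} {q : Fin (d+1) → ℂ} (j : Fin d)
    (hh : DifferentiableAt ℝ h (fun j => q j.castSucc)) :
    wDbar j.castSucc (fun q' => h (fun i => q' i.castSucc)) q
      = wDbar j h (fun i => q i.castSucc) := by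
  unfold wDbar; rw [fderiv_comp_proj hh]
  simp [ContinuousLinearMap.comp_apply, projCLM_single_castSucc]

lemma wD_comp_proj_last {h : (Fin d → ℂ) → ℂ} {q : Fin (d+1) → ℂ}
    (hh : DifferentiableAt ℝ h (fun j => q j.castSucc)) :
    wD (Fin.last d) (fun q' => h (fun i => q' i.castSucc)) q = 0 := by
  unfold wD; rw [fderiv_comp_proj hh]
  simp [ContinuousLinearMap.comp_apply, projCLM_single_last]

lemma wDbar_comp_proj_last {h : (Fin d → ℂ) → ℂ} {q : Fin (d+1) → ℂ}
    (hh : DifferentiableAt ℝ h (fun j => q j.castSucc)) :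
    wDbar (Fin.last d) (fun q' => h (fun i => q' i.castSucc)) q = 0 := by
  unfold wDbar; rw [fderiv_comp_proj hh]
  simp [ContinuousLinearMap.comp_apply, projCLM_single_last]

/-- Smoothness of `wD j f`. -/
lemma contDiffAt_wD {f : (Fin n → ℂ) → ℂ} {p : Fin n → ℂ} (j : Fin n)
    (hf : ContDiffAt ℝ (⊤ : ℕ∞) f p) : ContDiffAt ℝ (⊤ : ℕ∞) (wD j f) p := by
  have hD : ContDiffAt ℝ (⊤ : ℕ∞) (fderiv ℝ f) p := hf.fderiv_right (by simp)
  have h1 : ContDiffAt ℝ (⊤ : ℕ∞) (fun q => fderiv ℝ f q (Pi.single j 1)) p :=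
    hD.clm_apply contDiffAt_const
  have h2 : ContDiffAt ℝ (⊤ : ℕ∞) (fun q => fderiv ℝ f q (Pi.single j Complex.I)) p :=
    hD.clm_apply contDiffAt_const
  exact (contDiffAt_const.mul (h1.sub (contDiffAt_const.mul h2)))

lemma contDiffAt_wDbar {f : (Fin n → ℂ) → ℂ} {p : Fin n → ℂ} (j : Fin n)
    (hf : ContDiffAt ℝ (⊤ : ℕ∞) f p) : ContDiffAt ℝ (⊤ : ℕ∞) (wDbar j f) p := by
  have hD : ContDiffAt ℝ (⊤ : ℕ∞) (fderiv ℝ f) p := hf.fderiv_right (by simp)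
  have h1 : ContDiffAt ℝ (⊤ : ℕ∞) (fun q => fderiv ℝ f q (Pi.single j 1)) p :=
    hD.clm_apply contDiffAt_const
  have h2 : ContDiffAt ℝ (⊤ : ℕ∞) (fun q => fderiv ℝ f q (Pi.single j Complex.I)) p :=
    hD.clm_apply contDiffAt_const
  exact (contDiffAt_const.mul (h1.add (contDiffAt_const.mul h2)))

end CHAux3
noncomputable section CHAux4
open Complex

variable {d : ℕ} {μ : ℝ} {N : (Fin d → ℂ) → ℝ} {Ω : Set (Fin d → ℂ)}

/-- `N^μ` as a real function. -/
def Frf (μ : ℝ) (N : (Fin d → ℂ) → ℝ) : (Fin d → ℂ) → ℝ := fun z => N z ^ μ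

/-- `N^μ` as a complex function. -/
def Fcf (μ : ℝ) (N : (Fin d → ℂ) → ℝ) : (Fin d → ℂ) → ℂ := fun z => ((N z ^ μ : ℝ) : ℂ)

/-- `log N^μ` as a complex function. -/
def Lcf (μ : ℝ) (N : (Fin d → ℂ) → ℝ) : (Fin d → ℂ) → ℂ :=
  fun y => ((Real.log (N y ^ μ) : ℝ) : ℂ)

/-- `Y = N^μ - |w|²` as a real function on `ℂ^{d+1}`. -/
def Yrf (d : ℕ) (μ : ℝ) (N : (Fin d → ℂ) → ℝ) : (Fin (d+1) → ℂ) → ℝ :=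
  fun q => N (fun j => q j.castSucc) ^ μ - ‖q (Fin.last d)‖ ^ 2

/-- `Y` as a complex function. -/
def Ycf (d : ℕ) (μ : ℝ) (N : (Fin d → ℂ) → ℝ) : (Fin (d+1) → ℂ) → ℂ :=
  fun q => ((Yrf d μ N q : ℝ) : ℂ)

def e1f (μ : ℝ) (N : (Fin d → ℂ) → ℝ) (j : Fin d) : (Fin d → ℂ) → ℂ := wD j (Fcf μ N)
def f1f (μ : ℝ) (N : (Fin d → ℂ) → ℝ) (k : Fin d) : (Fin d → ℂ) → ℂ := wDbar k (Fcf μ N)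
def f2f (μ : ℝ) (N : (Fin d → ℂ) → ℝ) (j k : Fin d) : (Fin d → ℂ) → ℂ := wD j (f1f μ N k)

/-- The neighbourhood of the Cartan-Hartogs domain in `ℂ^{d+1}` on which we work. -/
def Udom (d : ℕ) (μ : ℝ) (N : (Fin d → ℂ) → ℝ) (Ω : Set (Fin d → ℂ)) :
    Set (Fin (d+1) → ℂ) :=
  {q | (fun j => q j.castSucc) ∈ Ω ∧ 0 < Yrf d μ N q}

section smooth

variable (hΩo : IsOpen Ω) (hNsm : ContDiffOn ℝ (⊤ : ℕ∞) N Ω) (hNpos : ∀ z ∈ Ω, 0 < N z)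

lemma contDiffAt_N (hΩo : IsOpen Ω) (hNsm : ContDiffOn ℝ (⊤ : ℕ∞) N Ω) {z : Fin d → ℂ} (hz : z ∈ Ω) :
    ContDiffAt ℝ (⊤ : ℕ∞) N z :=
  hNsm.contDiffAt (hΩo.mem_nhds hz)

lemma contDiffAt_Fr (hΩo : IsOpen Ω) (hNsm : ContDiffOn ℝ (⊤ : ℕ∞) N Ω) (hNpos : ∀ z ∈ Ω, 0 < N z)
    {z : Fin d → ℂ} (hz : z ∈ Ω) : ContDiffAt ℝ (⊤ : ℕ∞) (Frf μ N) z :=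
  (contDiffAt_N hΩo hNsm hz).rpow_const_of_ne (hNpos z hz).ne'

lemma contDiffAt_Fc (hΩo : IsOpen Ω) (hNsm : ContDiffOn ℝ (⊤ : ℕ∞) N Ω) (hNpos : ∀ z ∈ Ω, 0 < N z)
    {z : Fin d → ℂ} (hz : z ∈ Ω) : ContDiffAt ℝ (⊤ : ℕ∞) (Fcf μ N) z :=
  Complex.ofRealCLM.contDiff.contDiffAt.comp z (contDiffAt_Fr hΩo hNsm hNpos hz)

lemma Fr_pos (hNpos : ∀ z ∈ Ω, 0 < N z) {z : Fin d → ℂ} (hz : z ∈ Ω) : 0 < Frf μ N z :=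
  Real.rpow_pos_of_pos (hNpos z hz) μ

lemma contDiffAt_Lc (hΩo : IsOpen Ω) (hNsm : ContDiffOn ℝ (⊤ : ℕ∞) N Ω) (hNpos : ∀ z ∈ Ω, 0 < N z)
    {z : Fin d → ℂ} (hz : z ∈ Ω) : ContDiffAt ℝ (⊤ : ℕ∞) (Lcf μ N) z := by
  have h1 : ContDiffAt ℝ (⊤ : ℕ∞) (fun y => Real.log (N y ^ μ)) z :=
    (Real.contDiffAt_log.2 (Fr_pos hNpos hz).ne').comp z (contDiffAt_Fr hΩo hNsm hNpos hz)
  exact Complex.ofRealCLM.contDiff.contDiffAt.comp z h1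

lemma contDiffAt_normSq_last {q : Fin (d+1) → ℂ} : ContDiffAt ℝ (⊤ : ℕ∞)
    (fun q : Fin (d+1) → ℂ => ‖q (Fin.last d)‖ ^ 2) q := by
  have h : (fun q : Fin (d+1) → ℂ => ‖q (Fin.last d)‖ ^ 2)
      = fun q => (q (Fin.last d)).re * (q (Fin.last d)).re
        + (q (Fin.last d)).im * (q (Fin.last d)).im := by
    funext q
    rw [Complex.sq_norm, Complex.normSq_apply]
  rw [h]
  have hc : ContDiffAt ℝ (⊤ : ℕ∞) (fun q : Fin (d+1) → ℂ => q (Fin.last d)) q :=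
    (ContinuousLinearMap.proj (Fin.last d) :
      (Fin (d+1) → ℂ) →L[ℝ] ℂ).contDiff.contDiffAt
  have hre : ContDiffAt ℝ (⊤ : ℕ∞) (fun q : Fin (d+1) → ℂ => (q (Fin.last d)).re) q :=
    Complex.reCLM.contDiff.contDiffAt.comp q hc
  have him : ContDiffAt ℝ (⊤ : ℕ∞) (fun q : Fin (d+1) → ℂ => (q (Fin.last d)).im) q :=
    Complex.imCLM.contDiff.contDiffAt.comp q hc
  exact (hre.mul hre).add (him.mul him)

lemma contDiffAt_proj {q : Fin (d+1) → ℂ} :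
    ContDiffAt ℝ (⊤ : ℕ∞) (fun q' : Fin (d+1) → ℂ => (fun j : Fin d => q' j.castSucc)) q :=
  (projCLM d).contDiff.contDiffAt

lemma contDiffAt_Yr (hΩo : IsOpen Ω) (hNsm : ContDiffOn ℝ (⊤ : ℕ∞) N Ω) (hNpos : ∀ z ∈ Ω, 0 < N z)
    {q : Fin (d+1) → ℂ} (hq : (fun j => q j.castSucc) ∈ Ω) :
    ContDiffAt ℝ (⊤ : ℕ∞) (Yrf d μ N) q := by
  have h1 : ContDiffAt ℝ (⊤ : ℕ∞) (fun q' : Fin (d+1) → ℂ => Frf μ N (fun j => q' j.castSucc)) q :=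
    (contDiffAt_Fr hΩo hNsm hNpos hq).comp (g := Frf μ N) q contDiffAt_proj
  exact h1.sub contDiffAt_normSq_last

lemma contDiffAt_Yc (hΩo : IsOpen Ω) (hNsm : ContDiffOn ℝ (⊤ : ℕ∞) N Ω) (hNpos : ∀ z ∈ Ω, 0 < N z)
    {q : Fin (d+1) → ℂ} (hq : (fun j => q j.castSucc) ∈ Ω) :
    ContDiffAt ℝ (⊤ : ℕ∞) (Ycf d μ N) q :=
  Complex.ofRealCLM.contDiff.contDiffAt.comp q (contDiffAt_Yr hΩo hNsm hNpos hq)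

lemma contDiffAt_CHpot (hΩo : IsOpen Ω) (hNsm : ContDiffOn ℝ (⊤ : ℕ∞) N Ω) (hNpos : ∀ z ∈ Ω, 0 < N z)
    {q : Fin (d+1) → ℂ} (hq : q ∈ Udom d μ N Ω) :
    ContDiffAt ℝ (⊤ : ℕ∞) (CHpot d μ N) q := by
  have h1 : ContDiffAt ℝ (⊤ : ℕ∞) (fun q' => Real.log (Yrf d μ N q')) q :=
    (Real.contDiffAt_log.2 hq.2.ne').comp q (contDiffAt_Yr hΩo hNsm hNpos hq.1)
  have h2 : ContDiffAt ℝ (⊤ : ℕ∞) (fun q' => ((Real.log (Yrf d μ N q') : ℝ) : ℂ)) q :=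
    Complex.ofRealCLM.contDiff.contDiffAt.comp q h1
  exact h2.neg

lemma Uopen (hΩo : IsOpen Ω) (hNsm : ContDiffOn ℝ (⊤ : ℕ∞) N Ω) (hNpos : ∀ z ∈ Ω, 0 < N z) :
    IsOpen (Udom d μ N Ω) := by
  have hV : IsOpen {q : Fin (d+1) → ℂ | (fun j => q j.castSucc) ∈ Ω} :=
    hΩo.preimage (projCLM d).continuous
  have hYr : ContinuousOn (Yrf d μ N) {q : Fin (d+1) → ℂ | (fun j => q j.castSucc) ∈ Ω} := by
    intro q hq
    exact ((contDiffAt_Yr hΩo hNsm hNpos hq).continuousAt).continuousWithinAt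
  have h2 := hYr.isOpen_inter_preimage hV (isOpen_Ioi (a := (0:ℝ)))
  have h3 : Udom d μ N Ω
      = {q : Fin (d+1) → ℂ | (fun j => q j.castSucc) ∈ Ω} ∩ Yrf d μ N ⁻¹' Set.Ioi 0 := by
    ext q
    simp only [Udom, Set.mem_setOf_eq, Set.mem_inter_iff, Set.mem_preimage, Set.mem_Ioi]
  rw [h3]; exact h2

end smooth
end CHAux4
noncomputable section CHAux5
open Complex

variable {d : ℕ} {μ : ℝ} {N : (Fin d → ℂ) → ℝ} {Ω : Set (Fin d → ℂ)}

lemma oRYr_eq : Ycf d μ N = fun q =>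
    Fcf μ N (fun j => q j.castSucc) - q (Fin.last d) * (starRingEnd ℂ) (q (Fin.last d)) := by
  funext q
  simp only [Ycf, Yrf, Fcf, Complex.ofReal_sub]
  congr 1
  rw [Complex.sq_norm, Complex.mul_conj]

section derivs

variable (hΩo : IsOpen Ω) (hNsm : ContDiffOn ℝ (⊤ : ℕ∞) N Ω) (hNpos : ∀ z ∈ Ω, 0 < N z)
variable {q : Fin (d+1) → ℂ}

-- differentiability helpers
lemma diff_Fc_pr (hΩo : IsOpen Ω) (hNsm : ContDiffOn ℝ (⊤ : ℕ∞) N Ω) (hNpos : ∀ z ∈ Ω, 0 < N z)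
    (hq : (fun j => q j.castSucc) ∈ Ω) :
    DifferentiableAt ℝ (fun q' : Fin (d+1) → ℂ => Fcf μ N (fun j => q' j.castSucc)) q :=
  (((contDiffAt_Fc hΩo hNsm hNpos hq).comp (g := Fcf μ N) q contDiffAt_proj).differentiableAt (by simp))

lemma diff_coord_last : DifferentiableAt ℝ (fun q' : Fin (d+1) → ℂ => q' (Fin.last d)) q :=
  (ContinuousLinearMap.proj (Fin.last d) : (Fin (d+1) → ℂ) →L[ℝ] ℂ).differentiableAt

lemma diff_conj_coord_last :
    DifferentiableAt ℝ (fun q' : Fin (d+1) → ℂ => (starRingEnd ℂ) (q' (Fin.last d))) q :=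
  ((Complex.conjCLE.toContinuousLinearMap).comp
    (ContinuousLinearMap.proj (Fin.last d) : (Fin (d+1) → ℂ) →L[ℝ] ℂ)).differentiableAt

lemma diff_W : DifferentiableAt ℝ
    (fun q' : Fin (d+1) → ℂ => q' (Fin.last d) * (starRingEnd ℂ) (q' (Fin.last d))) q :=
  diff_coord_last.mul diff_conj_coord_last

lemma last_ne_castSucc (k : Fin d) : (Fin.last d = k.castSucc) = False := by
  simp [(Fin.castSucc_lt_last k).ne']

-- first derivatives of Yc
lemma wDbar_Yc_castSucc (hΩo : IsOpen Ω) (hNsm : ContDiffOn ℝ (⊤ : ℕ∞) N Ω) (hNpos : ∀ z ∈ Ω, 0 < N z)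
    (hq : (fun j => q j.castSucc) ∈ Ω) (k : Fin d) :
    wDbar k.castSucc (Ycf d μ N) q = f1f μ N k (fun j => q j.castSucc) := by
  rw [oRYr_eq]
  rw [wDbar_sub k.castSucc (diff_Fc_pr hΩo hNsm hNpos hq) diff_W]
  rw [wDbar_comp_proj_castSucc k ((contDiffAt_Fc hΩo hNsm hNpos hq).differentiableAt (by simp))]
  rw [wDbar_mul k.castSucc diff_coord_last diff_conj_coord_last]
  rw [wDbar_coord, wDbar_coord_conj]
  simp [f1f, last_ne_castSucc]

lemma wD_Yc_castSucc (hΩo : IsOpen Ω) (hNsm : ContDiffOn ℝ (⊤ : ℕ∞) N Ω) (hNpos : ∀ z ∈ Ω, 0 < N z)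
    (hq : (fun j => q j.castSucc) ∈ Ω) (j : Fin d) :
    wD j.castSucc (Ycf d μ N) q = e1f μ N j (fun j => q j.castSucc) := by
  rw [oRYr_eq]
  rw [wD_sub j.castSucc (diff_Fc_pr hΩo hNsm hNpos hq) diff_W]
  rw [wD_comp_proj_castSucc j ((contDiffAt_Fc hΩo hNsm hNpos hq).differentiableAt (by simp))]
  rw [wD_mul j.castSucc diff_coord_last diff_conj_coord_last]
  rw [wD_coord, wD_coord_conj]
  simp [e1f, last_ne_castSucc]

lemma wDbar_Yc_last (hΩo : IsOpen Ω) (hNsm : ContDiffOn ℝ (⊤ : ℕ∞) N Ω) (hNpos : ∀ z ∈ Ω, 0 < N z)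
    (hq : (fun j => q j.castSucc) ∈ Ω) :
    wDbar (Fin.last d) (Ycf d μ N) q = -(q (Fin.last d)) := by
  rw [oRYr_eq]
  rw [wDbar_sub (Fin.last d) (diff_Fc_pr hΩo hNsm hNpos hq) diff_W]
  rw [wDbar_comp_proj_last ((contDiffAt_Fc hΩo hNsm hNpos hq).differentiableAt (by simp))]
  rw [wDbar_mul (Fin.last d) diff_coord_last diff_conj_coord_last]
  rw [wDbar_coord, wDbar_coord_conj]
  simp

lemma wD_Yc_last (hΩo : IsOpen Ω) (hNsm : ContDiffOn ℝ (⊤ : ℕ∞) N Ω) (hNpos : ∀ z ∈ Ω, 0 < N z)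
    (hq : (fun j => q j.castSucc) ∈ Ω) :
    wD (Fin.last d) (Ycf d μ N) q = -((starRingEnd ℂ) (q (Fin.last d))) := by
  rw [oRYr_eq]
  rw [wD_sub (Fin.last d) (diff_Fc_pr hΩo hNsm hNpos hq) diff_W]
  rw [wD_comp_proj_last ((contDiffAt_Fc hΩo hNsm hNpos hq).differentiableAt (by simp))]
  rw [wD_mul (Fin.last d) diff_coord_last diff_conj_coord_last]
  rw [wD_coord, wD_coord_conj]
  simp

-- first derivatives of the potential
lemma Yc_ne (hq : q ∈ Udom d μ N Ω) : Ycf d μ N q ≠ 0 := by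
  simp only [Ycf, ne_eq, Complex.ofReal_eq_zero]
  exact hq.2.ne'

lemma wDbar_CHpot_castSucc (hΩo : IsOpen Ω) (hNsm : ContDiffOn ℝ (⊤ : ℕ∞) N Ω)
    (hNpos : ∀ z ∈ Ω, 0 < N z) (hq : q ∈ Udom d μ N Ω) (k : Fin d) :
    wDbar k.castSucc (CHpot d μ N) q
      = -((Ycf d μ N q)⁻¹ * f1f μ N k (fun j => q j.castSucc)) := by
  have h0 : CHpot d μ N = fun p => -((Real.log (Yrf d μ N p) : ℝ) : ℂ) := rfl
  rw [h0, wDbar_neg]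
  rw [wDbar_oR_log k.castSucc
    ((contDiffAt_Yr hΩo hNsm hNpos hq.1).differentiableAt (by simp)) hq.2.ne']
  have h1 : (fun q' => ((Yrf d μ N q' : ℝ) : ℂ)) = Ycf d μ N := rfl
  rw [h1, wDbar_Yc_castSucc hΩo hNsm hNpos hq.1 k]
  rw [Complex.ofReal_inv]
  rfl

lemma wDbar_CHpot_last (hΩo : IsOpen Ω) (hNsm : ContDiffOn ℝ (⊤ : ℕ∞) N Ω)
    (hNpos : ∀ z ∈ Ω, 0 < N z) (hq : q ∈ Udom d μ N Ω) :
    wDbar (Fin.last d) (CHpot d μ N) q = (Ycf d μ N q)⁻¹ * q (Fin.last d) := by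
  have h0 : CHpot d μ N = fun p => -((Real.log (Yrf d μ N p) : ℝ) : ℂ) := rfl
  rw [h0, wDbar_neg]
  rw [wDbar_oR_log (Fin.last d)
    ((contDiffAt_Yr hΩo hNsm hNpos hq.1).differentiableAt (by simp)) hq.2.ne']
  have h1 : (fun q' => ((Yrf d μ N q' : ℝ) : ℂ)) = Ycf d μ N := rfl
  rw [h1, wDbar_Yc_last hΩo hNsm hNpos hq.1]
  rw [Complex.ofReal_inv]
  have h2 : ((Yrf d μ N q : ℝ) : ℂ) = Ycf d μ N q := rfl
  rw [h2]; ring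

end derivs
end CHAux5
noncomputable section CHAux6
open Complex

variable {d : ℕ} {μ : ℝ} {N : (Fin d → ℂ) → ℝ} {Ω : Set (Fin d → ℂ)}
variable {q : Fin (d+1) → ℂ}

lemma diff_Yc_inv (hΩo : IsOpen Ω) (hNsm : ContDiffOn ℝ (⊤ : ℕ∞) N Ω) (hNpos : ∀ z ∈ Ω, 0 < N z)
    (hq : q ∈ Udom d μ N Ω) :
    DifferentiableAt ℝ (fun q' => (Ycf d μ N q')⁻¹) q :=
  (((contDiffAt_Yc hΩo hNsm hNpos hq.1).differentiableAt (by simp)).inv (Yc_ne hq))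

lemma diff_f1_pr (hΩo : IsOpen Ω) (hNsm : ContDiffOn ℝ (⊤ : ℕ∞) N Ω) (hNpos : ∀ z ∈ Ω, 0 < N z)
    (hq : (fun j => q j.castSucc) ∈ Ω) (k : Fin d) :
    DifferentiableAt ℝ (fun q' : Fin (d+1) → ℂ => f1f μ N k (fun j => q' j.castSucc)) q :=
  ((contDiffAt_wDbar k (contDiffAt_Fc hΩo hNsm hNpos hq)).comp q
    contDiffAt_proj).differentiableAt (by simp)

lemma wD_Yc_inv_castSucc (hΩo : IsOpen Ω) (hNsm : ContDiffOn ℝ (⊤ : ℕ∞) N Ω)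
    (hNpos : ∀ z ∈ Ω, 0 < N z) (hq : q ∈ Udom d μ N Ω) (j : Fin d) :
    wD j.castSucc (fun q' => (Ycf d μ N q')⁻¹) q
      = -((Ycf d μ N q) ^ 2)⁻¹ * e1f μ N j (fun i => q i.castSucc) := by
  rw [wD_inv j.castSucc ((contDiffAt_Yc hΩo hNsm hNpos hq.1).differentiableAt (by simp)) (Yc_ne hq)]
  rw [wD_Yc_castSucc hΩo hNsm hNpos hq.1 j]

lemma wD_Yc_inv_last (hΩo : IsOpen Ω) (hNsm : ContDiffOn ℝ (⊤ : ℕ∞) N Ω)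
    (hNpos : ∀ z ∈ Ω, 0 < N z) (hq : q ∈ Udom d μ N Ω) :
    wD (Fin.last d) (fun q' => (Ycf d μ N q')⁻¹) q
      = ((Ycf d μ N q) ^ 2)⁻¹ * (starRingEnd ℂ) (q (Fin.last d)) := by
  rw [wD_inv (Fin.last d) ((contDiffAt_Yc hΩo hNsm hNpos hq.1).differentiableAt (by simp))
    (Yc_ne hq)]
  rw [wD_Yc_last hΩo hNsm hNpos hq.1]
  ring

-- the metric entries
lemma gCH_cs_cs (hΩo : IsOpen Ω) (hNsm : ContDiffOn ℝ (⊤ : ℕ∞) N Ω)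
    (hNpos : ∀ z ∈ Ω, 0 < N z) (hq : q ∈ Udom d μ N Ω) (j k : Fin d) :
    gCH d μ N j.castSucc k.castSucc q
      = -(f2f μ N j k (fun i => q i.castSucc) * (Ycf d μ N q)⁻¹)
        + e1f μ N j (fun i => q i.castSucc) * f1f μ N k (fun i => q i.castSucc)
          * ((Ycf d μ N q)⁻¹) ^ 2 := by
  have hev : wDbar k.castSucc (CHpot d μ N)
      =ᶠ[nhds q] fun q' => -((Ycf d μ N q')⁻¹ * f1f μ N k (fun i => q' i.castSucc)) := by
    filter_upwards [(Uopen hΩo hNsm hNpos).mem_nhds hq] with q' hq'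
    exact wDbar_CHpot_castSucc hΩo hNsm hNpos hq' k
  rw [gCH, wD_congr j.castSucc hev, wD_neg]
  rw [wD_mul j.castSucc (diff_Yc_inv hΩo hNsm hNpos hq) (diff_f1_pr hΩo hNsm hNpos hq.1 k)]
  rw [wD_Yc_inv_castSucc hΩo hNsm hNpos hq j]
  rw [wD_comp_proj_castSucc (h := f1f μ N k) j
    ((contDiffAt_wDbar k (contDiffAt_Fc hΩo hNsm hNpos hq.1)).differentiableAt (by simp))]
  have hf2 : wD j (f1f μ N k) (fun i => q i.castSucc) = f2f μ N j k (fun i => q i.castSucc) := rfl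
  rw [hf2]
  ring

lemma gCH_cs_last (hΩo : IsOpen Ω) (hNsm : ContDiffOn ℝ (⊤ : ℕ∞) N Ω)
    (hNpos : ∀ z ∈ Ω, 0 < N z) (hq : q ∈ Udom d μ N Ω) (j : Fin d) :
    gCH d μ N j.castSucc (Fin.last d) q
      = -(q (Fin.last d) * e1f μ N j (fun i => q i.castSucc) * ((Ycf d μ N q)⁻¹) ^ 2) := by
  have hev : wDbar (Fin.last d) (CHpot d μ N)
      =ᶠ[nhds q] fun q' => (Ycf d μ N q')⁻¹ * q' (Fin.last d) := by
    filter_upwards [(Uopen hΩo hNsm hNpos).mem_nhds hq] with q' hq'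
    exact wDbar_CHpot_last hΩo hNsm hNpos hq'
  rw [gCH, wD_congr j.castSucc hev]
  rw [wD_mul j.castSucc (diff_Yc_inv hΩo hNsm hNpos hq) diff_coord_last]
  rw [wD_Yc_inv_castSucc hΩo hNsm hNpos hq j, wD_coord]
  simp only [last_ne_castSucc, if_false]
  ring

lemma gCH_last_cs (hΩo : IsOpen Ω) (hNsm : ContDiffOn ℝ (⊤ : ℕ∞) N Ω)
    (hNpos : ∀ z ∈ Ω, 0 < N z) (hq : q ∈ Udom d μ N Ω) (k : Fin d) :
    gCH d μ N (Fin.last d) k.castSucc q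
      = -((starRingEnd ℂ) (q (Fin.last d)) * f1f μ N k (fun i => q i.castSucc)
          * ((Ycf d μ N q)⁻¹) ^ 2) := by
  have hev : wDbar k.castSucc (CHpot d μ N)
      =ᶠ[nhds q] fun q' => -((Ycf d μ N q')⁻¹ * f1f μ N k (fun i => q' i.castSucc)) := by
    filter_upwards [(Uopen hΩo hNsm hNpos).mem_nhds hq] with q' hq'
    exact wDbar_CHpot_castSucc hΩo hNsm hNpos hq' k
  rw [gCH, wD_congr (Fin.last d) hev, wD_neg]
  rw [wD_mul (Fin.last d) (diff_Yc_inv hΩo hNsm hNpos hq) (diff_f1_pr hΩo hNsm hNpos hq.1 k)]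
  rw [wD_Yc_inv_last hΩo hNsm hNpos hq]
  rw [wD_comp_proj_last (h := f1f μ N k)
    ((contDiffAt_wDbar k (contDiffAt_Fc hΩo hNsm hNpos hq.1)).differentiableAt (by simp))]
  ring

lemma gCH_last_last (hΩo : IsOpen Ω) (hNsm : ContDiffOn ℝ (⊤ : ℕ∞) N Ω)
    (hNpos : ∀ z ∈ Ω, 0 < N z) (hq : q ∈ Udom d μ N Ω) :
    gCH d μ N (Fin.last d) (Fin.last d) q
      = (Ycf d μ N q)⁻¹ + q (Fin.last d) * (starRingEnd ℂ) (q (Fin.last d))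
          * ((Ycf d μ N q)⁻¹) ^ 2 := by
  have hev : wDbar (Fin.last d) (CHpot d μ N)
      =ᶠ[nhds q] fun q' => (Ycf d μ N q')⁻¹ * q' (Fin.last d) := by
    filter_upwards [(Uopen hΩo hNsm hNpos).mem_nhds hq] with q' hq'
    exact wDbar_CHpot_last hΩo hNsm hNpos hq'
  rw [gCH, wD_congr (Fin.last d) hev]
  rw [wD_mul (Fin.last d) (diff_Yc_inv hΩo hNsm hNpos hq) diff_coord_last]
  rw [wD_Yc_inv_last hΩo hNsm hNpos hq, wD_coord]
  simp only [if_true, eq_self_iff_true]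
  ring

-- gOm explicit formula
lemma wDbar_Lc (hΩo : IsOpen Ω) (hNsm : ContDiffOn ℝ (⊤ : ℕ∞) N Ω)
    (hNpos : ∀ z ∈ Ω, 0 < N z) {z : Fin d → ℂ} (hz : z ∈ Ω) (k : Fin d) :
    wDbar k (Lcf μ N) z = (Fcf μ N z)⁻¹ * f1f μ N k z := by
  have h0 : Lcf μ N = fun y => ((Real.log (Frf μ N y) : ℝ) : ℂ) := rfl
  rw [h0]
  rw [wDbar_oR_log k ((contDiffAt_Fr hΩo hNsm hNpos hz).differentiableAt (by simp))
    (Fr_pos hNpos hz).ne']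
  have h1 : (fun y => ((Frf μ N y : ℝ) : ℂ)) = Fcf μ N := rfl
  rw [h1, Complex.ofReal_inv]
  rfl

lemma Fc_ne (hNpos : ∀ z ∈ Ω, 0 < N z) {z : Fin d → ℂ} (hz : z ∈ Ω) : Fcf μ N z ≠ 0 := by
  simp only [Fcf, ne_eq, Complex.ofReal_eq_zero]
  exact (Fr_pos hNpos hz).ne'

lemma gOm_eq (hΩo : IsOpen Ω) (hNsm : ContDiffOn ℝ (⊤ : ℕ∞) N Ω)
    (hNpos : ∀ z ∈ Ω, 0 < N z) {z : Fin d → ℂ} (hz : z ∈ Ω) (j k : Fin d) :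
    gOm d μ N j k z
      = -(f2f μ N j k z * (Fcf μ N z)⁻¹)
        + e1f μ N j z * f1f μ N k z * ((Fcf μ N z)⁻¹) ^ 2 := by
  have h0 : gOm d μ N j k z = -(wD j (wDbar k (Lcf μ N)) z) := rfl
  rw [h0]
  have hev : wDbar k (Lcf μ N) =ᶠ[nhds z] fun z' => (Fcf μ N z')⁻¹ * f1f μ N k z' := by
    filter_upwards [hΩo.mem_nhds hz] with z' hz'
    exact wDbar_Lc hΩo hNsm hNpos hz' k
  rw [wD_congr j hev]
  rw [wD_mul (f := fun z' => (Fcf μ N z')⁻¹) (g := f1f μ N k) j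
    (((contDiffAt_Fc hΩo hNsm hNpos hz).differentiableAt (by simp)).inv (Fc_ne hNpos hz))
    ((contDiffAt_wDbar k (contDiffAt_Fc hΩo hNsm hNpos hz)).differentiableAt (by simp))]
  rw [wD_inv j ((contDiffAt_Fc hΩo hNsm hNpos hz).differentiableAt (by simp)) (Fc_ne hNpos hz)]
  have he : wD j (Fcf μ N) z = e1f μ N j z := rfl
  have hf : wD j (f1f μ N k) z = f2f μ N j k z := rfl
  rw [he, hf]
  ring

end CHAux6
noncomputable section CHAux7
open Complex Matrix

variable {d : ℕ} {μ γ : ℝ} {N : (Fin d → ℂ) → ℝ} {Ω : Set (Fin d → ℂ)}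
variable {q : Fin (d+1) → ℂ}

lemma Fc_eq_Yc_add (q : Fin (d+1) → ℂ) :
    Fcf μ N (fun j => q j.castSucc)
      = Ycf d μ N q + q (Fin.last d) * (starRingEnd ℂ) (q (Fin.last d)) := by
  have := congrFun (oRYr_eq (d := d) (μ := μ) (N := N)) q
  rw [this]; ring

lemma det_gCH (hΩo : IsOpen Ω) (hNsm : ContDiffOn ℝ (⊤ : ℕ∞) N Ω) (hNpos : ∀ z ∈ Ω, 0 < N z)
    (hMA : ∀ z ∈ Ω, (gOmMat d μ N z).det = ((N z ^ (-γ) : ℝ) : ℂ))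
    (hq : q ∈ Udom d μ N Ω) :
    (gCHmat d μ N q).det
      = (Fcf μ N (fun i => q i.castSucc)) ^ (d+1)
        * ((N (fun i => q i.castSucc) ^ (-γ) : ℝ) : ℂ)
        * ((Ycf d μ N q)⁻¹) ^ (d+2) := by
  set z' : Fin d → ℂ := fun i => q i.castSucc with hz'
  set Y : ℂ := Ycf d μ N q with hY
  set w : ℂ := q (Fin.last d) with hw
  have hYne : Y ≠ 0 := Yc_ne hq
  have hFne : Fcf μ N z' ≠ 0 := Fc_ne hNpos hq.1
  have hFY : Fcf μ N z' = Y + w * (starRingEnd ℂ) w := Fc_eq_Yc_add q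
  set A : Matrix (Fin d) (Fin d) ℂ := Matrix.of fun j k =>
    -(f2f μ N j k z' * Y⁻¹) + e1f μ N j z' * f1f μ N k z' * (Y⁻¹) ^ 2 with hA
  set B : Matrix (Fin d) (Fin 1) ℂ := Matrix.of fun j _ =>
    -(w * e1f μ N j z' * (Y⁻¹) ^ 2) with hB
  set C : Matrix (Fin 1) (Fin d) ℂ := Matrix.of fun _ k =>
    -((starRingEnd ℂ) w * f1f μ N k z' * (Y⁻¹) ^ 2) with hC
  set Dval : ℂ := Y⁻¹ + w * (starRingEnd ℂ) w * (Y⁻¹) ^ 2 with hDval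
  set D : Matrix (Fin 1) (Fin 1) ℂ := Matrix.of fun _ _ => Dval with hD
  have hDval2 : Dval = Fcf μ N z' * (Y⁻¹) ^ 2 := by
    have h1 : Y * (Y⁻¹) ^ 2 = Y⁻¹ := by
      rw [pow_two, ← mul_assoc, mul_inv_cancel₀ hYne, one_mul]
    have h2 : (Y + w * (starRingEnd ℂ) w) * Y⁻¹ ^ 2
        = Y * Y⁻¹ ^ 2 + w * (starRingEnd ℂ) w * Y⁻¹ ^ 2 := by ring
    rw [hDval, hFY, h2, h1]
  have hDvalne : Dval ≠ 0 := by
    rw [hDval2]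
    exact mul_ne_zero hFne (pow_ne_zero 2 (inv_ne_zero hYne))
  -- identify the matrix with a block matrix
  have hblocks : (gCHmat d μ N q).submatrix finSumFinEquiv finSumFinEquiv
      = Matrix.fromBlocks A B C D := by
    have hnat : ∀ i : Fin 1, finSumFinEquiv (Sum.inr i) = Fin.last d := by
      intro i
      apply Fin.ext; simp [Fin.ext_iff, Fin.last]
    ext i j
    cases i with
    | inl i =>
      cases j with
      | inl j =>
        show gCH d μ N i.castSucc j.castSucc q = A i j
        rw [gCH_cs_cs hΩo hNsm hNpos hq i j]; rfl
      | inr j =>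
        show gCH d μ N i.castSucc (finSumFinEquiv (Sum.inr j)) q = B i j
        rw [hnat j, gCH_cs_last hΩo hNsm hNpos hq i]; rfl
    | inr i =>
      cases j with
      | inl j =>
        show gCH d μ N (finSumFinEquiv (Sum.inr i)) j.castSucc q = C i j
        rw [hnat i, gCH_last_cs hΩo hNsm hNpos hq j]; rfl
      | inr j =>
        show gCH d μ N (finSumFinEquiv (Sum.inr i)) (finSumFinEquiv (Sum.inr j)) q = D i j
        rw [hnat i, hnat j, gCH_last_last hΩo hNsm hNpos hq]; rfl
  have hdet0 : (gCHmat d μ N q).det = (Matrix.fromBlocks A B C D).det := by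
    rw [← hblocks, Matrix.det_submatrix_equiv_self]
  -- invertibility of the 1×1 block
  set D' : Matrix (Fin 1) (Fin 1) ℂ := Matrix.of fun _ _ => Dval⁻¹ with hD'
  have hmul1 : D * D' = 1 := by
    ext i j
    fin_cases i; fin_cases j
    simp [hD, hD', Matrix.mul_apply, Matrix.one_apply, mul_inv_cancel₀ hDvalne]
  have hmul2 : D' * D = 1 := by
    ext i j
    fin_cases i; fin_cases j
    simp [hD, hD', Matrix.mul_apply, Matrix.one_apply, inv_mul_cancel₀ hDvalne]
  haveI hinv : Invertible D := ⟨D', hmul2, hmul1⟩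
  have hinvOf : (⅟D : Matrix (Fin 1) (Fin 1) ℂ) = D' := invOf_eq_right_inv hmul1
  rw [hdet0, Matrix.det_fromBlocks₂₂, hinvOf]
  -- the Schur complement
  have hschur : A - B * D' * C = (Fcf μ N z' * Y⁻¹) • gOmMat d μ N z' := by
    ext j k
    have hg : gOmMat d μ N z' j k = gOm d μ N j k z' := rfl
    simp only [Matrix.sub_apply, Matrix.smul_apply, hg, Matrix.mul_apply, Fin.sum_univ_one,
      gOm_eq hΩo hNsm hNpos hq.1 j k, hA, hB, hC, hD', Matrix.of_apply, smul_eq_mul]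
    have hYw : Y + w * (starRingEnd ℂ) w ≠ 0 := by rw [← hFY]; exact hFne
    rw [gOm_eq (z := z') hΩo hNsm hNpos hq.1 j k]
    rw [hDval2, hFY]
    field_simp
    ring
  rw [hschur, Matrix.det_smul, Matrix.det_fin_one]
  rw [hMA z' hq.1]
  have hcard : Fintype.card (Fin d) = d := Fintype.card_fin d
  rw [hcard]
  show Dval * ((Fcf μ N z' * Y⁻¹) ^ d * _) = _
  rw [hDval2]
  ring
end CHAux7
noncomputable section CHAux8
open Complex Matrix

variable {d : ℕ} {μ γ : ℝ} {N : (Fin d → ℂ) → ℝ} {Ω : Set (Fin d → ℂ)}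
variable {q : Fin (d+1) → ℂ}

lemma logdet_eq (hΩo : IsOpen Ω) (hNsm : ContDiffOn ℝ (⊤ : ℕ∞) N Ω) (hNpos : ∀ z ∈ Ω, 0 < N z)
    (hμ : μ ≠ 0)
    (hMA : ∀ z ∈ Ω, (gOmMat d μ N z).det = ((N z ^ (-γ) : ℝ) : ℂ))
    (hq : q ∈ Udom d μ N Ω) :
    Complex.log ((gCHmat d μ N q).det)
      = (((μ * ((d : ℝ) + 1) - γ) / μ : ℝ) : ℂ) * Lcf μ N (fun i => q i.castSucc)
        + ((d : ℂ) + 2) * CHpot d μ N q := by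
  have hz' : (fun i => q i.castSucc) ∈ Ω := hq.1
  have hN0 : 0 < N (fun i => q i.castSucc) := hNpos _ hz'
  have hYr0 : 0 < Yrf d μ N q := hq.2
  have hFr0 : 0 < N (fun i => q i.castSucc) ^ μ := Real.rpow_pos_of_pos hN0 μ
  set R : ℝ := (N (fun i => q i.castSucc) ^ μ) ^ (d+1)
      * N (fun i => q i.castSucc) ^ (-γ) * ((Yrf d μ N q)⁻¹) ^ (d+2) with hR
  have hR0 : 0 < R := by
    apply mul_pos (mul_pos (pow_pos hFr0 _) (Real.rpow_pos_of_pos hN0 _))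
    exact pow_pos (inv_pos.2 hYr0) _
  have hdet : (gCHmat d μ N q).det = ((R : ℝ) : ℂ) := by
    rw [det_gCH hΩo hNsm hNpos hMA hq, hR]
    push_cast [Fcf, Ycf]
    ring
  rw [hdet, ← Complex.ofReal_log hR0.le]
  have hRHS : (((μ * ((d : ℝ) + 1) - γ) / μ : ℝ) : ℂ) * Lcf μ N (fun i => q i.castSucc)
        + ((d : ℂ) + 2) * CHpot d μ N q
      = ((((μ * ((d : ℝ) + 1) - γ) / μ) * Real.log (N (fun i => q i.castSucc) ^ μ)
          - ((d : ℝ) + 2) * Real.log (Yrf d μ N q) : ℝ) : ℂ) := by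
    have h1 : Lcf μ N (fun i => q i.castSucc)
        = ((Real.log (N (fun i => q i.castSucc) ^ μ) : ℝ) : ℂ) := rfl
    have h2 : CHpot d μ N q = -((Real.log (Yrf d μ N q) : ℝ) : ℂ) := rfl
    rw [h1, h2]
    push_cast
    ring
  rw [hRHS]
  congr 1
  rw [hR, Real.log_mul (by positivity) (by positivity),
    Real.log_mul (by positivity) (by positivity),
    Real.log_pow, Real.log_pow, Real.log_inv, Real.log_rpow hN0, Real.log_rpow hN0]
  field_simp
  push_cast
  ring
end CHAux8
/-- the Ricci tensor of a Cartan–Hartogs domain. -/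
theorem ricci_gCH (d : ℕ) (hd : 1 ≤ d) (γ μ : ℝ) (hγ : 0 < γ) (hμ : 0 < μ)
    (Ω : Set (Fin d → ℂ)) (hΩopen : IsOpen Ω) (hΩconn : IsPreconnected Ω)
    (N : (Fin d → ℂ) → ℝ) (hNsm : ContDiffOn ℝ (⊤ : ℕ∞) N Ω) (hNpos : ∀ z ∈ Ω, 0 < N z)
    (hMA : ∀ z ∈ Ω, (gOmMat d μ N z).det = ((N z ^ (-γ) : ℝ) : ℂ))
    (hgPD : ∀ z ∈ Ω, ∀ w : ℂ, ‖w‖ ^ 2 < N z ^ μ →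
      (gCHmat d μ N (Fin.snoc z w)).PosDef)
    (z : Fin d → ℂ) (w : ℂ) (hz : z ∈ Ω) (hw : ‖w‖ ^ 2 < N z ^ μ) :
    (∀ j k : Fin d,
      RicCH d μ N j.castSucc k.castSucc (Fin.snoc z w) =
        (((μ * (d + 1 : ℝ) - γ) / μ : ℝ) : ℂ) * gOm d μ N j k z -
          ((d : ℂ) + 2) * gCH d μ N j.castSucc k.castSucc (Fin.snoc z w)) ∧
    (∀ α β : Fin (d + 1), α = Fin.last d ∨ β = Fin.last d →
      RicCH d μ N α β (Fin.snoc z w) =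
        -((d : ℂ) + 2) * gCH d μ N α β (Fin.snoc z w)) := by
  have hμne : μ ≠ 0 := hμ.ne'
  set p₀ : Fin (d+1) → ℂ := Fin.snoc z w with hp₀
  have hpr : (fun j : Fin d => p₀ j.castSucc) = z := by
    funext j; simp [hp₀, Fin.snoc_castSucc]
  have hqU : p₀ ∈ Udom d μ N Ω := by
    constructor
    · rw [hpr]; exact hz
    · show 0 < N (fun j => p₀ j.castSucc) ^ μ - ‖p₀ (Fin.last d)‖ ^ 2
      rw [hpr]
      simp only [hp₀, Fin.snoc_last]
      exact sub_pos.2 hw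
  have hU : Udom d μ N Ω ∈ nhds p₀ := (Uopen hΩopen hNsm hNpos).mem_nhds hqU
  set c₁ : ℂ := (((μ * ((d : ℝ) + 1) - γ) / μ : ℝ) : ℂ) with hc₁
  set LD : (Fin (d+1) → ℂ) → ℂ := fun q' => Complex.log ((gCHmat d μ N q').det) with hLD
  -- case β = castSucc k : first conjugate derivative of log det
  have hbar_cs : ∀ k : Fin d, wDbar k.castSucc LD =ᶠ[nhds p₀]
      fun q' => c₁ * wDbar k (Lcf μ N) (fun i => q' i.castSucc)
        + ((d : ℂ) + 2) * wDbar k.castSucc (CHpot d μ N) q' := by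
    intro k
    filter_upwards [hU] with q' hq'
    have hev' : LD =ᶠ[nhds q'] fun q'' =>
        c₁ * Lcf μ N (fun i => q'' i.castSucc) + ((d : ℂ) + 2) * CHpot d μ N q'' := by
      filter_upwards [(Uopen hΩopen hNsm hNpos).mem_nhds hq'] with q'' hq''
      exact logdet_eq hΩopen hNsm hNpos hμne hMA hq''
    rw [wDbar_congr k.castSucc hev']
    have hd1 : DifferentiableAt ℝ (fun q'' => Lcf μ N (fun i => q'' i.castSucc)) q' :=
      ((contDiffAt_Lc hΩopen hNsm hNpos hq'.1).comp (g := Lcf μ N) q' contDiffAt_proj).differentiableAt (by simp)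
    have hd2 : DifferentiableAt ℝ (CHpot d μ N) q' :=
      (contDiffAt_CHpot hΩopen hNsm hNpos hq').differentiableAt (by simp)
    rw [wDbar_add k.castSucc (hd1.const_mul c₁) (hd2.const_mul _)]
    rw [wDbar_const_mul k.castSucc c₁ hd1, wDbar_const_mul k.castSucc _ hd2]
    rw [wDbar_comp_proj_castSucc (h := Lcf μ N) k
      ((contDiffAt_Lc hΩopen hNsm hNpos hq'.1).differentiableAt (by simp))]
  -- case β = last : first conjugate derivative of log det
  have hbar_last : wDbar (Fin.last d) LD =ᶠ[nhds p₀]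
      fun q' => ((d : ℂ) + 2) * wDbar (Fin.last d) (CHpot d μ N) q' := by
    filter_upwards [hU] with q' hq'
    have hev' : LD =ᶠ[nhds q'] fun q'' =>
        c₁ * Lcf μ N (fun i => q'' i.castSucc) + ((d : ℂ) + 2) * CHpot d μ N q'' := by
      filter_upwards [(Uopen hΩopen hNsm hNpos).mem_nhds hq'] with q'' hq''
      exact logdet_eq hΩopen hNsm hNpos hμne hMA hq''
    rw [wDbar_congr (Fin.last d) hev']
    have hd1 : DifferentiableAt ℝ (fun q'' => Lcf μ N (fun i => q'' i.castSucc)) q' :=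
      ((contDiffAt_Lc hΩopen hNsm hNpos hq'.1).comp (g := Lcf μ N) q' contDiffAt_proj).differentiableAt (by simp)
    have hd2 : DifferentiableAt ℝ (CHpot d μ N) q' :=
      (contDiffAt_CHpot hΩopen hNsm hNpos hq').differentiableAt (by simp)
    rw [wDbar_add (Fin.last d) (hd1.const_mul c₁) (hd2.const_mul _)]
    rw [wDbar_const_mul (Fin.last d) c₁ hd1, wDbar_const_mul (Fin.last d) _ hd2]
    rw [wDbar_comp_proj_last (h := Lcf μ N)
      ((contDiffAt_Lc hΩopen hNsm hNpos hq'.1).differentiableAt (by simp))]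
    ring
  -- differentiability facts at p₀
  have hdLc : ∀ k : Fin d,
      DifferentiableAt ℝ (fun q' : Fin (d+1) → ℂ =>
        wDbar k (Lcf μ N) (fun i => q' i.castSucc)) p₀ := by
    intro k
    have h1 : ContDiffAt ℝ (⊤ : ℕ∞) (wDbar k (Lcf μ N)) (fun i => p₀ i.castSucc) := by
      rw [hpr]
      exact contDiffAt_wDbar k (contDiffAt_Lc hΩopen hNsm hNpos hz)
    exact (h1.comp p₀ contDiffAt_proj).differentiableAt (by simp)
  have hdCH : ∀ β : Fin (d+1), DifferentiableAt ℝ (wDbar β (CHpot d μ N)) p₀ := fun β =>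
    (contDiffAt_wDbar β (contDiffAt_CHpot hΩopen hNsm hNpos hqU)).differentiableAt (by simp)
  constructor
  · -- both indices in the base
    intro j k
    have e1 : RicCH d μ N j.castSucc k.castSucc p₀
        = -(wD j.castSucc (wDbar k.castSucc LD) p₀) := rfl
    rw [e1, wD_congr j.castSucc (hbar_cs k)]
    rw [wD_add j.castSucc ((hdLc k).const_mul c₁) ((hdCH k.castSucc).const_mul _)]
    rw [wD_const_mul j.castSucc c₁ (hdLc k), wD_const_mul j.castSucc _ (hdCH k.castSucc)]
    rw [wD_comp_proj_castSucc (h := wDbar k (Lcf μ N)) j (by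
      rw [hpr]
      exact (contDiffAt_wDbar k (contDiffAt_Lc hΩopen hNsm hNpos hz)).differentiableAt (by simp))]
    have hgom : wD j (wDbar k (Lcf μ N)) (fun i => p₀ i.castSucc) = -(gOm d μ N j k z) := by
      rw [hpr]
      have : gOm d μ N j k z = -(wD j (wDbar k (Lcf μ N)) z) := rfl
      rw [this, neg_neg]
    rw [hgom]
    have hgch : wD j.castSucc (wDbar k.castSucc (CHpot d μ N)) p₀
        = gCH d μ N j.castSucc k.castSucc p₀ := rfl
    rw [hgch, hc₁]
    push_cast
    ring
  · -- one index equal to last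
    intro α β hor
    by_cases hβ : β = Fin.last d
    · subst hβ
      have e1 : RicCH d μ N α (Fin.last d) p₀
          = -(wD α (wDbar (Fin.last d) LD) p₀) := rfl
      rw [e1, wD_congr α hbar_last]
      rw [wD_const_mul α _ (hdCH (Fin.last d))]
      have hgch : wD α (wDbar (Fin.last d) (CHpot d μ N)) p₀
          = gCH d μ N α (Fin.last d) p₀ := rfl
      rw [hgch]
      ring
    · have hα : α = Fin.last d := hor.resolve_right hβ
      subst hα
      obtain ⟨k, hk⟩ : ∃ k : Fin d, k.castSucc = β := by
        rcases Fin.eq_castSucc_or_eq_last β with ⟨k, hk⟩ | h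
        · exact ⟨k, hk.symm⟩
        · exact absurd h hβ
      subst hk
      have e1 : RicCH d μ N (Fin.last d) k.castSucc p₀
          = -(wD (Fin.last d) (wDbar k.castSucc LD) p₀) := rfl
      rw [e1, wD_congr (Fin.last d) (hbar_cs k)]
      rw [wD_add (Fin.last d) ((hdLc k).const_mul c₁) ((hdCH k.castSucc).const_mul _)]
      rw [wD_const_mul (Fin.last d) c₁ (hdLc k), wD_const_mul (Fin.last d) _ (hdCH k.castSucc)]
      rw [wD_comp_proj_last (h := wDbar k (Lcf μ N)) (by
        rw [hpr]
        exact (contDiffAt_wDbar k (contDiffAt_Lc hΩopen hNsm hNpos hz)).differentiableAt (by simp))]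
      have hgch : wD (Fin.last d) (wDbar k.castSucc (CHpot d μ N)) p₀
          = gCH d μ N (Fin.last d) k.castSucc p₀ := rfl
      rw [hgch]
      ring
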